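/- arXiv:1602.03198 — 2 statements merged into one kernel-verified Lean document; each statement's English description precedes it below -/
import Mathlib

section
/- The infinite series (1/2) ∑_{n=1}^∞ (H_n² − H_n^{(2)}) / ((n+1)(n+2)) equals 1. -/
/-- Generalized harmonic number `H_n^{(r)} = ∑_{j=1}^n 1/j^r`. -/
noncomputable def H (n r : ℕ) : ℝ := ∑ j ∈ Finset.range n, (1 : ℝ) / (j + 1) ^ r

/-- Riemann zeta value `ζ(s) = ∑_{n=1}^∞ 1/n^s` (as a real series). -/
noncomputable def Z (s : ℕ) : ℝ := ∑' n : ℕ, (1 : ℝ) / (n + 1) ^ s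

/-- Double zeta value `ζ(a,b) = ∑_{m>n≥1} 1/(m^a n^b)`. -/
noncomputable def Z2 (a b : ℕ) : ℝ :=
  ∑' m : ℕ, (∑ j ∈ Finset.range m, (1 : ℝ) / (j + 1) ^ b) / (m + 1) ^ a

noncomputable def G (n : ℕ) : ℝ :=
  (H (n + 1) 1 ^ 2 - H (n + 1) 2 + 2 * H (n + 1) 1 + 2) / ((n : ℝ) + 2)

lemma H_succ (n r : ℕ) : H (n + 1) r = H n r + 1 / ((n : ℝ) + 1) ^ r := by
  simp [H, Finset.sum_range_succ]

lemma H_nonneg (n r : ℕ) : 0 ≤ H n r := by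
  apply Finset.sum_nonneg
  intro j _
  positivity

lemma diff_nonneg (n : ℕ) : 0 ≤ H (n + 1) 1 ^ 2 - H (n + 1) 2 := by
  induction n with
  | zero => simp [H]
  | succ n ih =>
    rw [H_succ (n + 1) 1, H_succ (n + 1) 2]
    have h1 : (0 : ℝ) ≤ H (n + 1) 1 := H_nonneg _ _
    have h2 : (0 : ℝ) < (n : ℝ) + 1 + 1 := by positivity
    push_cast
    simp only [pow_one]
    have hc : (1 / ((n : ℝ) + 1 + 1)) ^ 2 = 1 / ((n : ℝ) + 1 + 1) ^ 2 := by
      rw [div_pow, one_pow]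
    nlinarith [mul_nonneg h1 (le_of_lt (by positivity : (0:ℝ) < 1 / ((n:ℝ) + 1 + 1)))]

lemma G_nonneg (n : ℕ) : 0 ≤ G n := by
  have h1 := diff_nonneg n
  have h2 := H_nonneg (n + 1) 1
  have h3 : (0 : ℝ) < (n : ℝ) + 2 := by positivity
  apply div_nonneg _ h3.le
  linarith

lemma telescope (n : ℕ) :
    (H (n + 1) 1 ^ 2 - H (n + 1) 2) / (((n : ℝ) + 2) * ((n : ℝ) + 3)) = G n - G (n + 1) := by
  unfold G
  rw [H_succ (n + 1) 1, H_succ (n + 1) 2]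
  have h2 : ((n : ℝ) + 2) ≠ 0 := by positivity
  have h3 : ((n : ℝ) + 3) ≠ 0 := by positivity
  have hc : ((n : ℝ) + 1 + 1) ≠ 0 := by positivity
  push_cast
  field_simp
  ring

lemma partial_sum (n : ℕ) :
    ∑ i ∈ Finset.range n,
      (H (i + 1) 1 ^ 2 - H (i + 1) 2) / (((i : ℝ) + 2) * ((i : ℝ) + 3)) = G 0 - G n := by
  rw [← Finset.sum_range_sub' G n]
  exact Finset.sum_congr rfl fun i _ => telescope i

lemma G_zero : G 0 = 2 := by
  simp [G, H]

lemma H_le_log (n : ℕ) : H (n + 1) 1 ≤ 1 + Real.log ((n : ℝ) + 1) := by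
  induction n with
  | zero => simp [H]
  | succ n ih =>
    rw [H_succ (n + 1) 1]
    have hpos : (0 : ℝ) < ((n : ℝ) + 1) / ((n : ℝ) + 2) := by positivity
    have hlog := Real.log_le_sub_one_of_pos hpos
    rw [Real.log_div (by positivity) (by positivity)] at hlog
    have heq : ((n : ℝ) + 1) / ((n : ℝ) + 2) - 1 = -(1 / ((n : ℝ) + 2)) := by
      field_simp
      norm_num
    have key : Real.log ((n : ℝ) + 1) + 1 / ((n : ℝ) + 2) ≤ Real.log ((n : ℝ) + 2) := by
      rw [heq] at hlog; linarith
    push_cast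
    simp only [pow_one]
    have hcast : ((n : ℝ) + 1 + 1) = (n : ℝ) + 2 := by ring
    rw [hcast]
    linarith

lemma G_tendsto : Filter.Tendsto G Filter.atTop (nhds 0) := by
  have key : ∀ k : ℕ, Filter.Tendsto
      (fun n : ℕ => Real.log ((n : ℝ) + 1) ^ k / ((n : ℝ) + 2)) Filter.atTop (nhds 0) := by
    intro k
    have h := Real.tendsto_pow_log_div_mul_add_atTop 1 1 k one_ne_zero
    have hcomp : Filter.Tendsto (fun n : ℕ => (n : ℝ) + 1) Filter.atTop Filter.atTop :=
      Filter.tendsto_atTop_add_const_right _ 1 tendsto_natCast_atTop_atTop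
    refine (h.comp hcomp).congr fun n => ?_
    simp only [Function.comp, one_mul]
    ring_nf
  have hbound : ∀ n : ℕ, G n ≤
      (Real.log ((n : ℝ) + 1) ^ 2 + 4 * Real.log ((n : ℝ) + 1) + 5) / ((n : ℝ) + 2) := by
    intro n
    have hH := H_le_log n
    have hHn := H_nonneg (n + 1) 1
    have hH2 := H_nonneg (n + 1) 2
    have h2 : (0 : ℝ) < (n : ℝ) + 2 := by positivity
    have hL : (0 : ℝ) ≤ Real.log ((n : ℝ) + 1) := Real.log_nonneg (by push_cast; linarith)
    unfold G
    apply div_le_div_of_nonneg_right _ h2.le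
    nlinarith [sq_nonneg (H (n + 1) 1 - Real.log ((n : ℝ) + 1) - 1)]
  have hupper : Filter.Tendsto
      (fun n : ℕ => (Real.log ((n : ℝ) + 1) ^ 2 + 4 * Real.log ((n : ℝ) + 1) + 5) / ((n : ℝ) + 2))
      Filter.atTop (nhds 0) := by
    have h := ((key 2).add (((key 1).const_mul 4))).add ((key 0).const_mul 5)
    simp only [mul_zero, add_zero, zero_add] at h
    refine h.congr fun n => ?_
    have h2 : ((n : ℝ) + 2) ≠ 0 := by positivity
    simp only [pow_zero]
    field_simp
  exact tendsto_of_tendsto_of_tendsto_of_le_of_le tendsto_const_nhds hupper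
    (fun n => G_nonneg n) hbound

theorem stmt3 :
    (1 / 2 : ℝ) * ∑' n : ℕ, (H (n + 1) 1 ^ 2 - H (n + 1) 2) / (((n : ℝ) + 2) * ((n : ℝ) + 3)) = 1 := by
  set f : ℕ → ℝ := fun n => (H (n + 1) 1 ^ 2 - H (n + 1) 2) / (((n : ℝ) + 2) * ((n : ℝ) + 3)) with hf
  have hnn : ∀ n, 0 ≤ f n := by
    intro n
    apply div_nonneg (diff_nonneg n)
    positivity
  have hsummable : Summable f := by
    apply summable_of_sum_range_le hnn
    intro n
    rw [partial_sum n]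
    linarith [G_nonneg n]
  have htend : Filter.Tendsto (fun n => ∑ i ∈ Finset.range n, f i) Filter.atTop (nhds (G 0)) := by
    have : (fun n => ∑ i ∈ Finset.range n, f i) = fun n => G 0 - G n := by
      funext n; exact partial_sum n
    rw [this]
    simpa using (tendsto_const_nhds.sub G_tendsto)
  have := tendsto_nhds_unique hsummable.hasSum.tendsto_sum_nat htend
  rw [this, G_zero]
  norm_num
end

section
/- For every integer k ≥ 2, the infinite series ∑_{n=1}^∞ H_n^{(k)} / ((n+1)(n+2)) equals ∑_{i=0}^{k−2} (−1)^i ζ(k−i) + (−1)^{k−1}. -/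
open Filter Finset

lemma tend0 (a : ℝ) : Tendsto (fun n : ℕ => 1 / ((n:ℝ) + a)) atTop (nhds 0) := by
  simp only [one_div]
  exact (tendsto_atTop_add_const_right atTop a tendsto_natCast_atTop_atTop).inv_tendsto_atTop

lemma tele (a : ℝ) (ha : 0 < a) :
    HasSum (fun n : ℕ => 1 / (((n:ℝ) + a) * ((n:ℝ) + a + 1))) (1 / a) := by
  have key : ∀ n : ℕ, 1 / (((n:ℝ) + a) * ((n:ℝ) + a + 1)) =
      1 / ((n:ℝ) + a) - 1 / (((n:ℕ)+1 : ℕ) + a) := by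
    intro n
    have h1 : ((n:ℝ) + a) ≠ 0 := by positivity
    have h2 : ((n:ℝ) + a + 1) ≠ 0 := by positivity
    push_cast
    rw [show (n:ℝ) + 1 + a = (n:ℝ) + a + 1 by ring, div_sub_div _ _ h1 h2]
    congr 1
    ring
  rw [(hasSum_iff_tendsto_nat_of_nonneg (fun n => by positivity) _)]
  have hps : ∀ N : ℕ, ∑ n ∈ range N, 1 / (((n:ℝ) + a) * ((n:ℝ) + a + 1)) =
      1 / ((0:ℕ) + a : ℝ) - 1 / ((N:ℝ) + a) := by
    intro N
    rw [Finset.sum_congr rfl (fun n _ => key n),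
      Finset.sum_range_sub' (fun i : ℕ => 1 / ((i:ℝ) + a))]
  simp only [hps]
  have h := (tendsto_const_nhds (x := 1/((0:ℕ)+a:ℝ)) (f := atTop (α := ℕ))).sub (tend0 a)
  simpa using h

/-- summability of the zeta-type series -/
lemma zsummable {s : ℕ} (hs : 2 ≤ s) : Summable (fun n : ℕ => 1 / ((n:ℝ) + 1) ^ s) := by
  have := (Real.summable_one_div_nat_pow (p := s)).2 (by omega)
  have h := (summable_nat_add_iff (f := fun n : ℕ => 1 / (n:ℝ) ^ s) 1).2 this
  refine h.congr fun n => ?_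
  push_cast
  ring_nf

/-- inner sum over n ≥ j -/
lemma inner_hasSum (k j : ℕ) :
    HasSum (fun n : ℕ => if j ≤ n then
        (1 / ((j:ℝ) + 1) ^ k) * (1 / (((n:ℝ) + 2) * ((n:ℝ) + 3))) else 0)
      ((1 / ((j:ℝ) + 1) ^ k) * (1 / ((j:ℝ) + 2))) := by
  have hinj : Function.Injective (fun m : ℕ => m + j) := add_left_injective j
  rw [← Function.Injective.hasSum_iff hinj ?_]
  · have h := ((tele ((j:ℝ) + 2) (by positivity)).mul_left (1 / ((j:ℝ) + 1) ^ k))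
    have heq : ((fun n : ℕ => if j ≤ n then
        (1 / ((j:ℝ) + 1) ^ k) * (1 / (((n:ℝ) + 2) * ((n:ℝ) + 3))) else 0) ∘ fun m : ℕ => m + j)
        = fun m : ℕ => (1 / ((j:ℝ) + 1) ^ k) * (1 / (((m:ℝ) + ((j:ℝ) + 2)) * ((m:ℝ) + ((j:ℝ) + 2) + 1))) := by
      funext m
      simp only [Function.comp_apply, if_pos (Nat.le_add_left j m)]
      push_cast
      ring_nf
    rw [heq]
    exact h
  · intro n hn
    have : ¬ j ≤ n := by
      intro h
      exact hn ⟨n - j, by simp; omega⟩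
    simp [this]

lemma swap_eq (k : ℕ) (hk : 2 ≤ k) :
    ∑' n : ℕ, (∑ j ∈ Finset.range (n+1), 1/((j:ℝ)+1)^k) / (((n:ℝ)+2)*((n:ℝ)+3)) =
      ∑' j : ℕ, (1/((j:ℝ)+1)^k) * (1/((j:ℝ)+2)) := by
  set F : ℕ → ℕ → ℝ := fun n j => if j ≤ n then
      (1 / ((j:ℝ) + 1) ^ k) * (1 / (((n:ℝ) + 2) * ((n:ℝ) + 3))) else 0 with hF
  have hFnonneg : ∀ n j, 0 ≤ F n j := by
    intro n j
    simp only [hF]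
    split <;> positivity
  have hrow : ∀ n, Summable (F n) := by
    intro n
    apply summable_of_ne_finset_zero (s := Finset.range (n+1))
    intro j hj
    simp only [Finset.mem_range] at hj
    simp only [hF, if_neg (by omega : ¬ j ≤ n)]
  have hrowsum : ∀ n : ℕ, ∑' j, F n j =
      (∑ j ∈ Finset.range (n+1), 1/((j:ℝ)+1)^k) / (((n:ℝ)+2)*((n:ℝ)+3)) := by
    intro n
    rw [tsum_eq_sum (s := Finset.range (n+1)) (by
      intro j hj
      simp only [Finset.mem_range] at hj
      simp only [hF, if_neg (by omega : ¬ j ≤ n)])]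
    have hterm : ∀ j ∈ Finset.range (n+1), F n j
        = 1/((j:ℝ)+1)^k * (1/(((n:ℝ)+2)*((n:ℝ)+3))) := by
      intro j hj
      simp only [Finset.mem_range] at hj
      simp only [hF, if_pos (by omega : j ≤ n)]
    rw [Finset.sum_congr rfl hterm, ← Finset.sum_mul]
    ring
  have hZsum : Summable (fun n : ℕ => 1 / ((n:ℝ) + 1) ^ k) := zsummable hk
  have htele : Summable (fun n : ℕ => 1 / (((n:ℝ)+2) * ((n:ℝ)+3))) :=
    (tele 2 two_pos).summable.congr fun n => by rw [show ((n:ℝ)+2+1)=((n:ℝ)+3) by ring]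
  have hcol : Summable (fun n : ℕ => ∑' j, F n j) := by
    refine Summable.of_nonneg_of_le (fun n => tsum_nonneg (hFnonneg n)) (fun n => ?_)
      (htele.mul_left (∑' m : ℕ, 1 / ((m:ℝ) + 1) ^ k))
    rw [hrowsum n, div_eq_mul_one_div]
    have h1 : (∑ j ∈ Finset.range (n+1), 1/((j:ℝ)+1)^k) ≤ ∑' m : ℕ, 1 / ((m:ℝ) + 1) ^ k :=
      Summable.sum_le_tsum _ (fun j _ => by positivity) hZsum
    have h3 : (0:ℝ) ≤ 1 / (((n:ℝ)+2)*((n:ℝ)+3)) := by positivity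
    exact mul_le_mul_of_nonneg_right h1 h3
  have hunc : Summable (Function.uncurry F) := by
    exact (summable_prod_of_nonneg (fun p => hFnonneg p.1 p.2)).mpr ⟨hrow, hcol⟩
  have hswap := Summable.tsum_comm (f := F) hunc
  calc ∑' n : ℕ, (∑ j ∈ Finset.range (n+1), 1/((j:ℝ)+1)^k) / (((n:ℝ)+2)*((n:ℝ)+3))
      = ∑' (n : ℕ) (j : ℕ), F n j := by
        exact tsum_congr fun n => (hrowsum n).symm
    _ = ∑' (j : ℕ) (n : ℕ), F n j := hswap.symm
    _ = ∑' j : ℕ, (1/((j:ℝ)+1)^k) * (1/((j:ℝ)+2)) := by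
        exact tsum_congr fun j => (inner_hasSum k j).tsum_eq

lemma Tsummable (k : ℕ) (hk : 1 ≤ k) :
    Summable (fun n : ℕ => 1/(((n:ℝ)+1)^k * ((n:ℝ)+2))) := by
  have htele : Summable (fun n : ℕ => 1 / (((n:ℝ)+1) * ((n:ℝ)+2))) :=
    (tele 1 one_pos).summable.congr fun n => by rw [show ((n:ℝ)+1+1)=((n:ℝ)+2) by ring]
  refine Summable.of_nonneg_of_le (fun n => by positivity) (fun n => ?_) htele
  have h1 : ((n:ℝ)+1) ≤ ((n:ℝ)+1)^k := le_self_pow₀ (by norm_num) (by omega)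
  have h2 : (0:ℝ) < ((n:ℝ)+1) * ((n:ℝ)+2) := by positivity
  exact one_div_le_one_div_of_le h2
    (mul_le_mul_of_nonneg_right h1 (by positivity))

lemma Tval : ∀ k : ℕ, 1 ≤ k →
    ∑' n : ℕ, 1/(((n:ℝ)+1)^k * ((n:ℝ)+2)) =
      (∑ i ∈ Finset.range (k-1), (-1:ℝ)^i * Z (k-i)) + (-1:ℝ)^(k-1) := by
  intro k hk
  induction k, hk using Nat.le_induction with
  | base =>
      simp only [pow_one]
      have := (tele 1 one_pos).tsum_eq
      simp only [show ∀ n : ℕ, ((n:ℝ)+1+1)=((n:ℝ)+2) from fun n => by ring] at this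
      simpa using this
  | succ k hk ih =>
      have hsum1 : Summable (fun n : ℕ => 1 / ((n:ℝ) + 1) ^ (k+1)) := zsummable (by omega)
      have hsum2 := Tsummable k hk
      have hsplit : ∀ n : ℕ, 1/(((n:ℝ)+1)^(k+1) * ((n:ℝ)+2)) =
          1 / ((n:ℝ) + 1) ^ (k+1) - 1/(((n:ℝ)+1)^k * ((n:ℝ)+2)) := by
        intro n
        have ha : ((n:ℝ)+1) ≠ 0 := by positivity
        have hb : ((n:ℝ)+2) ≠ 0 := by positivity
        have hc : ((n:ℝ)+1)^k ≠ 0 := by positivity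
        field_simp
        ring
      rw [tsum_congr hsplit, Summable.tsum_sub hsum1 hsum2, ih]
      have hz : ∑' n : ℕ, 1 / ((n:ℝ) + 1) ^ (k+1) = Z (k+1) := by
        rw [Z]
      rw [hz]
      -- algebra with sums
      have hk1 : k - 1 + 1 = k := by omega
      have hterm : ∀ i ∈ Finset.range (k-1),
          (-1:ℝ)^(i+1) * Z (k+1-(i+1)) = -((-1:ℝ)^i * Z (k-i)) := by
        intro i _
        rw [show k+1-(i+1)=k-i from by omega, pow_succ]
        ring
      have hrhs : ∑ i ∈ Finset.range k, (-1:ℝ)^i * Z (k+1-i) =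
          Z (k+1) - ∑ i ∈ Finset.range (k-1), (-1:ℝ)^i * Z (k-i) := by
        have hs := Finset.sum_range_succ' (fun i => (-1:ℝ)^i * Z (k+1-i)) (k-1)
        rw [hk1] at hs
        rw [hs, Finset.sum_congr rfl hterm]
        simp only [pow_zero, Nat.sub_zero, one_mul, Finset.sum_neg_distrib]
        ring
      have hpow : (-1:ℝ)^k = -(-1:ℝ)^(k-1) := by
        rw [show k = k-1+1 from hk1.symm]
        simp [pow_succ]
      simp only [Nat.add_sub_cancel]
      rw [hrhs, hpow]
      ring

theorem stmt9 (k : ℕ) (hk : 2 ≤ k) :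
    ∑' n : ℕ, H (n + 1) k / (((n : ℝ) + 2) * ((n : ℝ) + 3)) =
      (∑ i ∈ Finset.range (k - 1), (-1 : ℝ) ^ i * Z (k - i)) + (-1 : ℝ) ^ (k - 1) := by
  have h1 : ∑' n : ℕ, H (n + 1) k / (((n : ℝ) + 2) * ((n : ℝ) + 3)) =
      ∑' j : ℕ, (1/((j:ℝ)+1)^k) * (1/((j:ℝ)+2)) := swap_eq k hk
  have h2 : ∑' j : ℕ, (1/((j:ℝ)+1)^k) * (1/((j:ℝ)+2)) =
      ∑' j : ℕ, 1/(((j:ℝ)+1)^k * ((j:ℝ)+2)) :=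
    tsum_congr fun j => by rw [one_div_mul_one_div]
  rw [h1, h2, Tval k (by omega)]
end
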